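/- Let X be a Baire space, Y a topological space, (Z,d) a metric space, and f : X × Y → Z. Suppose: (a) for every y ∈ Y, the point y has a countable π-base in Y and the section f^y : x ↦ f(x,y) is quasicontinuous; (b) for every x ∈ X, the section f_x : y ↦ f(x,y) is fragmentable. Then f is cliquish on X × Y. -/

import Mathlib

open Set Topology

def Cliquish {X Z : Type*} [TopologicalSpace X] [MetricSpace Z] (f : X → Z) : Prop :=
  ∀ ε : ℝ, 0 < ε → ∀ U : Set X, IsOpen U → U.Nonempty →
    ∃ O : Set X, IsOpen O ∧ O.Nonempty ∧ O ⊆ U ∧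
      ∀ x ∈ O, ∀ y ∈ O, dist (f x) (f y) < ε

def Quasicontinuous' {X Z : Type*} [TopologicalSpace X] [MetricSpace Z] (f : X → Z) : Prop :=
  ∀ ε : ℝ, 0 < ε → ∀ x : X, ∀ V ∈ nhds x,
    ∃ O : Set X, IsOpen O ∧ O.Nonempty ∧ O ⊆ V ∧
      ∀ y ∈ O, dist (f x) (f y) < ε

def CliquishOn {X Z : Type*} [TopologicalSpace X] [MetricSpace Z] (f : X → Z) (S : Set X) : Prop :=
  ∀ ε : ℝ, 0 < ε → ∀ U : Set X, IsOpen U → (S ∩ U).Nonempty →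
    ∃ O : Set X, IsOpen O ∧ (S ∩ O).Nonempty ∧ S ∩ O ⊆ U ∧
      ∀ x ∈ S ∩ O, ∀ y ∈ S ∩ O, dist (f x) (f y) < ε

def Fragmentable {X Z : Type*} [TopologicalSpace X] [MetricSpace Z] (f : X → Z) : Prop :=
  ∀ S : Set X, S.Nonempty → CliquishOn f S

def CountablePiBase {Y : Type*} [TopologicalSpace Y] (y : Y) : Prop :=
  ∃ B : Set (Set Y), B.Countable ∧ (∀ O ∈ B, IsOpen O ∧ O.Nonempty) ∧
    ∀ U ∈ nhds y, ∃ O ∈ B, O ⊆ U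

/-!
Given a box `U × V` and `η > 0`, it suffices to find `y ∈ V` and nonempty open `A ⊆ U`, `B ⊆ V`
with `dist (f (x, z)) (f (x, y)) ≤ η` on `A × B`: quasicontinuity of `f (·, y)` then shrinks `A`
to a box on which `f` oscillates by little more than `2η`.

If there are no such sets, every open `A ⊆ U` contains a point `x` with `f (x, z)` far from
`f (x, y)` for some `z ∈ B`, and quasicontinuity of `f (·, z)` keeps `f (·, z)` near `f (x, z)` on
an open subset of `A`. Iterating along the countable π-bases of all points chosen so far, the Baire
property of `X` (in its Banach–Mazur game form) yields one `x` and points `yₖ` such that every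
π-base neighbourhood of every `yᵢ` contains some `yₖ` with `f (x, yₖ)` far from `f (x, yᵢ)`.
Then `f (x, ·)` is not cliquish on `{yₖ}`, against fragmentability.
-/

theorem exists_pairwiseDisjoint_subset_closure_biUnion {X ι : Type*} [TopologicalSpace X]
    {C : Set ι} {U : ι → Set X} {A : Set X}
    (h : ∀ W, IsOpen W → (W ∩ A).Nonempty → ∃ i ∈ C, (U i).Nonempty ∧ U i ⊆ W) :
    ∃ F ⊆ C, F.PairwiseDisjoint U ∧ A ⊆ closure (⋃ i ∈ F, U i) := by
  obtain ⟨F, hF⟩ := zorn_subset {F | F ⊆ C ∧ F.PairwiseDisjoint U} fun c hcS hc =>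
    ⟨⋃₀ c, ⟨sUnion_subset fun F hF => (hcS hF).1,
      (hc.pairwiseDisjoint_sUnion U).2 fun F hF => (hcS hF).2⟩, fun _ => subset_sUnion_of_mem⟩
  refine ⟨F, hF.prop.1, hF.prop.2, fun x hxA => ?_⟩
  by_contra hx
  obtain ⟨i, hiC, hine, hiW⟩ := h _ isClosed_closure.isOpen_compl ⟨x, hx, hxA⟩
  have hdisj : ∀ j ∈ F, Disjoint (U i) (U j) := fun j hj => disjoint_left.2 fun y hyi hyj =>
    hiW hyi (subset_closure (mem_biUnion hj hyj))
  have hiF : i ∉ F := fun hi => hine.ne_empty (disjoint_self.1 (hdisj i hi))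
  exact hiF (hF.mem_of_prop_insert
    ⟨insert_subset hiC hF.prop.1, hF.prop.2.insert fun j hj _ => hdisj j hj⟩)

section Tree

variable {N : Type*} (Fam : ℕ → N → Set N) (root : N)

def treeLevel : ℕ → Set N
  | 0 => {root}
  | k + 1 => ⋃ ν ∈ treeLevel k, Fam k ν

theorem forall_mem_treeLevel {P : ℕ → N → Prop} (h0 : P 0 root)
    (hstep : ∀ k ν, P k ν → ∀ ν' ∈ Fam k ν, P (k + 1) ν') :
    ∀ k, ∀ ν ∈ treeLevel Fam root k, P k ν
  | 0, _, rfl => h0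
  | k + 1, ν', hν' => by
    obtain ⟨ν, hν, hν'⟩ := mem_iUnion₂.1 hν'
    exact hstep k ν (forall_mem_treeLevel h0 hstep k ν hν) ν' hν'

variable {X : Type*} (U : N → Set X)

theorem pairwiseDisjoint_treeLevel (hsub : ∀ k ν, ∀ ν' ∈ Fam k ν, U ν' ⊆ U ν)
    (hdisj : ∀ k ν, (Fam k ν).PairwiseDisjoint U) :
    ∀ k, (treeLevel Fam root k).PairwiseDisjoint U
  | 0 => pairwiseDisjoint_singleton _ _
  | k + 1 => by
    intro ν₁' h₁ ν₂' h₂ hne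
    obtain ⟨ν₁, hν₁, h₁⟩ := mem_iUnion₂.1 h₁
    obtain ⟨ν₂, hν₂, h₂⟩ := mem_iUnion₂.1 h₂
    obtain rfl | hν := eq_or_ne ν₁ ν₂
    · exact hdisj k ν₁ h₁ h₂ hne
    · exact (pairwiseDisjoint_treeLevel hsub hdisj k hν₁ hν₂ hν).mono
        (hsub k ν₁ ν₁' h₁) (hsub k ν₂ ν₂' h₂)

theorem subset_closure_biUnion_treeLevel [TopologicalSpace X]
    (hdense : ∀ k, ∀ ν ∈ treeLevel Fam root k, U ν ⊆ closure (⋃ ν' ∈ Fam k ν, U ν')) :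
    ∀ k, U root ⊆ closure (⋃ ν ∈ treeLevel Fam root k, U ν)
  | 0 => by simpa [treeLevel] using subset_closure
  | k + 1 => (subset_closure_biUnion_treeLevel hdense k).trans <| closure_minimal
      (iUnion₂_subset fun ν hν => (hdense k ν hν).trans
        (closure_mono (biUnion_subset_biUnion_left (subset_biUnion_of_mem hν))))
      isClosed_closure

theorem exists_branch_of_forall_mem_treeLevel (hsub : ∀ k ν, ∀ ν' ∈ Fam k ν, U ν' ⊆ U ν)
    (hdisj : ∀ k ν, (Fam k ν).PairwiseDisjoint U) {x : X}
    (hx : ∀ k, ∃ ν ∈ treeLevel Fam root k, x ∈ U ν) :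
    ∃ ν : ℕ → N, ∀ k, ν k ∈ treeLevel Fam root k ∧ x ∈ U (ν k) ∧ ν (k + 1) ∈ Fam k (ν k) := by
  choose ν hν hxν using hx
  refine ⟨ν, fun k => ⟨hν k, hxν k, ?_⟩⟩
  obtain ⟨μ, hμ, hνμ⟩ := mem_iUnion₂.1 (hν (k + 1))
  obtain rfl : μ = ν k := (pairwiseDisjoint_treeLevel Fam root U hsub hdisj k).elim hμ (hν k)
    (not_disjoint_iff.2 ⟨x, hsub k μ _ hνμ (hxν (k + 1)), hxν k⟩)
  exact hνμ

end Tree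

section Baire

variable {X : Type*} [TopologicalSpace X] [BaireSpace X]

theorem exists_mem_forall_mem_of_subset_closure {A : Set X} (hA : IsOpen A) (hAne : A.Nonempty)
    {D : ℕ → Set X} (hD : ∀ k, IsOpen (D k)) (hAD : ∀ k, A ⊆ closure (D k)) :
    ∃ x ∈ A, ∀ k, x ∈ D k := by
  have hdense : ∀ k, Dense (D k ∪ (closure A)ᶜ) := fun k x => by
    by_cases hx : x ∈ closure A
    · exact closure_mono subset_union_left (closure_minimal (hAD k) isClosed_closure hx)
    · exact subset_closure (Or.inr hx)
  obtain ⟨x, hxA, hx⟩ := (dense_iInter_of_isOpen_nat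
    (fun k => (hD k).union isClosed_closure.isOpen_compl) hdense).inter_open_nonempty A hA hAne
  exact ⟨x, hxA, fun k => (mem_iInter.1 hx k).resolve_right (not_not.2 (subset_closure hxA))⟩

/- Oxtoby's argument: take, level by level, maximal disjoint families of refinements. Their unions
are open and dense in `A₀`, so by Baire's theorem some point lies in all of them, and disjointness
makes the nodes containing it a branch. -/
theorem BaireSpace.exists_seq_of_refine {T : Type*} (q : ℕ → T → X → Prop) (R : ℕ → T → T → Prop)
    (step : ∀ k s A, IsOpen A → A.Nonempty → (∀ x ∈ A, q k s x) →
      ∃ s' A', IsOpen A' ∧ A'.Nonempty ∧ A' ⊆ A ∧ (∀ x ∈ A', q (k + 1) s' x) ∧ R k s s')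
    {s₀ : T} {A₀ : Set X} (hA₀ : IsOpen A₀) (hA₀ne : A₀.Nonempty) (h₀ : ∀ x ∈ A₀, q 0 s₀ x) :
    ∃ (x : X) (σ : ℕ → T), ∀ k, q k (σ k) x ∧ R k (σ k) (σ (k + 1)) := by
  let good : ℕ → T × Set X → Prop := fun k ν => IsOpen ν.2 ∧ ∀ x ∈ ν.2, q k ν.1 x
  let children : ℕ → T × Set X → Set (T × Set X) := fun k ν =>
    {ν' | good (k + 1) ν' ∧ ν'.2 ⊆ ν.2 ∧ R k ν.1 ν'.1}
  have hFam : ∀ k ν, ∃ F ⊆ children k ν, F.PairwiseDisjoint Prod.snd ∧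
      (good k ν → ν.2 ⊆ closure (⋃ ν' ∈ F, ν'.2)) := by
    intro k ν
    by_cases hν : good k ν
    · obtain ⟨F, hFc, hFd, hFcl⟩ := exists_pairwiseDisjoint_subset_closure_biUnion
        (C := children k ν) (U := Prod.snd) (A := ν.2) fun W hW hWν => by
          obtain ⟨s', A', hA', hA'ne, hA'W, hq, hR⟩ :=
            step k ν.1 (W ∩ ν.2) (hW.inter hν.1) hWν fun x hx => hν.2 x hx.2
          exact ⟨(s', A'), ⟨⟨hA', hq⟩, hA'W.trans inter_subset_right, hR⟩, hA'ne,
            hA'W.trans inter_subset_left⟩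
      exact ⟨F, hFc, hFd, fun _ => hFcl⟩
    · exact ⟨∅, empty_subset _, pairwiseDisjoint_empty, fun h => absurd h hν⟩
  choose Fam hFamC hFamD hFamCl using hFam
  have hsub : ∀ k ν, ∀ ν' ∈ Fam k ν, ν'.2 ⊆ ν.2 := fun k ν ν' h => (hFamC k ν h).2.1
  have hgood : ∀ k, ∀ ν ∈ treeLevel Fam (s₀, A₀) k, good k ν :=
    forall_mem_treeLevel Fam _ ⟨hA₀, h₀⟩ fun k ν _ ν' h => (hFamC k ν h).1
  obtain ⟨x, -, hx⟩ := exists_mem_forall_mem_of_subset_closure hA₀ hA₀ne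
    (D := fun k => ⋃ ν ∈ treeLevel Fam (s₀, A₀) k, ν.2)
    (fun k => isOpen_biUnion fun ν hν => (hgood k ν hν).1)
    (subset_closure_biUnion_treeLevel Fam _ Prod.snd fun k ν hν => hFamCl k ν (hgood k ν hν))
  obtain ⟨ν, hν⟩ := exists_branch_of_forall_mem_treeLevel Fam _ Prod.snd hsub hFamD
    (x := x) fun k => by simpa using hx k
  exact ⟨x, fun k => (ν k).1,
    fun k => ⟨(hgood k _ (hν k).1).2 x (hν k).2.1, (hFamC _ _ (hν k).2.2).2.2⟩⟩

theorem BaireSpace.exists_seq_of_extend {T : Type*} (q : ℕ → T → X → Prop)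
    (R : ℕ → (ℕ → T) → T → Prop) (hR : ∀ k s s' t, (∀ i ≤ k, s i = s' i) → R k s t → R k s' t)
    (step : ∀ k (s : ℕ → T) A, IsOpen A → A.Nonempty → (∀ x ∈ A, ∀ i ≤ k, q i (s i) x) →
      ∃ t A', IsOpen A' ∧ A'.Nonempty ∧ A' ⊆ A ∧ (∀ x ∈ A', q (k + 1) t x) ∧ R k s t)
    {t₀ : T} {A₀ : Set X} (hA₀ : IsOpen A₀) (hA₀ne : A₀.Nonempty) (h₀ : ∀ x ∈ A₀, q 0 t₀ x) :
    ∃ (x : X) (c : ℕ → T), ∀ k, q k (c k) x ∧ R k c (c (k + 1)) := by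
  obtain ⟨x, σ, hσ⟩ := exists_seq_of_refine (fun k s x => ∀ i ≤ k, q i (s i) x)
    (fun k s s' => (∀ i ≤ k, s' i = s i) ∧ R k s (s' (k + 1)))
    (fun k s A hA hAne hsA => by
      obtain ⟨t, A', hA', hA'ne, hA'A, hq, hR⟩ := step k s A hA hAne hsA
      refine ⟨Function.update s (k + 1) t, A', hA', hA'ne, hA'A, fun x hx i hi => ?_,
        fun i hi => Function.update_of_ne (by omega) _ _, by rwa [Function.update_self]⟩
      rcases Nat.le_succ_iff.1 hi with hi | rfl
      · rw [Function.update_of_ne (by omega)]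
        exact hsA x (hA'A hx) i hi
      · rw [Function.update_self]
        exact hq x hx)
    hA₀ hA₀ne (s₀ := fun _ => t₀) fun x hx i hi => by
      obtain rfl := Nat.le_zero.1 hi
      exact h₀ x hx
  have hstab : ∀ i k, i ≤ k → σ k i = σ i i := fun i k hik => by
    induction k, hik using Nat.le_induction with
    | base => rfl
    | succ k hik ih => rw [(hσ k).2.1 i hik, ih]
  exact ⟨x, fun i => σ i i,
    fun k => ⟨(hσ k).1 k le_rfl, hR k _ _ _ (fun i hi => hstab i k hi) (hσ k).2.2⟩⟩

end Baire

section Sections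

variable {X Y Z : Type*} [TopologicalSpace X] [TopologicalSpace Y] [MetricSpace Z]

theorem CountablePiBase.exists_seq_subset {y : Y} (h : CountablePiBase y) {V : Set Y}
    (hV : V ∈ 𝓝 y) :
    ∃ b : ℕ → Set Y, (∀ n, IsOpen (b n) ∧ (b n).Nonempty ∧ b n ⊆ V) ∧
      ∀ N ∈ 𝓝 y, ∃ n, b n ⊆ N := by
  obtain ⟨B, hBc, hBo, hB⟩ := h
  obtain ⟨O, hOB, hOV⟩ := hB V hV
  obtain ⟨b, hb⟩ := (hBc.mono (sep_subset B (· ⊆ V))).exists_eq_range ⟨O, hOB, hOV⟩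
  have hmem : ∀ n, b n ∈ {O ∈ B | O ⊆ V} := fun n => by rw [hb]; exact mem_range_self n
  refine ⟨b, fun n => ⟨(hBo _ (hmem n).1).1, (hBo _ (hmem n).1).2, (hmem n).2⟩, fun N hN => ?_⟩
  obtain ⟨O, hOB, hON⟩ := hB (N ∩ V) (Filter.inter_mem hN hV)
  obtain ⟨n, rfl⟩ : O ∈ range b := by rw [← hb]; exact ⟨hOB, hON.trans inter_subset_right⟩
  exact ⟨n, hON.trans inter_subset_left⟩

theorem not_cliquishOn_of_forall_nhds {g : Y → Z} {S : Set Y} (hS : S.Nonempty) {r : ℝ}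
    (hr : 0 < r) (h : ∀ y ∈ S, ∀ N ∈ 𝓝 y, ∃ z ∈ S ∩ N, r ≤ dist (g z) (g y)) :
    ¬ CliquishOn g S := fun hg => by
  obtain ⟨O, hO, ⟨y, hyS, hyO⟩, -, hosc⟩ := hg r hr univ isOpen_univ (by simpa using hS)
  obtain ⟨z, ⟨hzS, hzO⟩, hz⟩ := h y hyS O (hO.mem_nhds hyO)
  exact (hosc z ⟨hzS, hzO⟩ y ⟨hyS, hyO⟩).not_ge hz

theorem not_cliquishOn_range_of_forall_unpair {g : Y → Z} {y : ℕ → Y} {v : ℕ → Z}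
    {b : Y → ℕ → Set Y} (hb : ∀ i, ∀ N ∈ 𝓝 (y i), ∃ n, b (y i) n ⊆ N) {δ : ℝ} (hδ : 0 < δ)
    (hv : ∀ k, dist (g (y k)) (v k) < δ)
    (hy : ∀ k, y (k + 1) ∈ b (y k.unpair.1) k.unpair.2 ∧ 3 * δ < dist (v (k + 1)) (v k.unpair.1)) :
    ¬ CliquishOn g (range y) := by
  refine not_cliquishOn_of_forall_nhds (range_nonempty y) hδ ?_
  rintro _ ⟨i, rfl⟩ N hN
  obtain ⟨n, hn⟩ := hb i N hN
  obtain ⟨hmem, hfar⟩ := hy (Nat.pair i n)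
  simp only [Nat.unpair_pair] at hmem hfar
  refine ⟨_, ⟨mem_range_self _, hn hmem⟩, ?_⟩
  linarith [hv i, hv (Nat.pair i n + 1),
    dist_comm (v (Nat.pair i n + 1)) (g (y (Nat.pair i n + 1))),
    dist_triangle4 (v (Nat.pair i n + 1)) (g (y (Nat.pair i n + 1))) (g (y i)) (v i)]

theorem exists_open_forall_dist_le [BaireSpace X] {f : X × Y → Z}
    (hY : ∀ y : Y, CountablePiBase y) (hqc : ∀ y : Y, Quasicontinuous' fun x : X => f (x, y))
    (hfrag : ∀ x : X, Fragmentable fun y : Y => f (x, y)) {U : Set X} {V : Set Y}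
    (hU : IsOpen U) (hV : IsOpen V) (hUne : U.Nonempty) (hVne : V.Nonempty) {η : ℝ} (hη : 0 < η) :
    ∃ y ∈ V, ∃ B, IsOpen B ∧ B.Nonempty ∧ B ⊆ V ∧ ∃ A, IsOpen A ∧ A.Nonempty ∧ A ⊆ U ∧
      ∀ x ∈ A, ∀ z ∈ B, dist (f (x, z)) (f (x, y)) ≤ η := by
  obtain ⟨δ, hδ, rfl⟩ : ∃ δ, 0 < δ ∧ η = 4 * δ := ⟨η / 4, by positivity, by ring⟩
  by_contra! hfar
  choose! b hb using fun y (hy : y ∈ V) => (hY y).exists_seq_subset (hV.mem_nhds hy)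
  obtain ⟨x₀, hx₀⟩ := hUne
  obtain ⟨y₀, hy₀⟩ := hVne
  obtain ⟨A₀, hA₀, hA₀ne, hA₀U, hA₀y₀⟩ := hqc y₀ δ hδ x₀ U (hU.mem_nhds hx₀)
  -- A term `(y, v)` records a point `y ∈ V` and an approximation `v` of `f (x, y)`; through
  -- `Nat.unpair`, every π-base set of every earlier point receives a later point.
  obtain ⟨x, c, hc⟩ := BaireSpace.exists_seq_of_extend
    (fun _ t x => x ∈ U ∧ t.1 ∈ V ∧ dist (f (x, t.1)) t.2 < δ)
    (fun k s t => t.1 ∈ b (s k.unpair.1).1 k.unpair.2 ∧ 3 * δ < dist t.2 (s k.unpair.1).2)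
    (fun k s s' t hss' => by rw [hss' _ (Nat.unpair_left_le k)]; exact id)
    (fun k s A hA ⟨a, ha⟩ hsA => by
      obtain ⟨-, hyV, -⟩ := hsA a ha _ (Nat.unpair_left_le k)
      obtain ⟨hBo, hBne, hBV⟩ := (hb _ hyV).1 k.unpair.2
      obtain ⟨x', hx'A, z, hzB, hx'z⟩ := hfar _ hyV _ hBo hBne hBV A hA ⟨a, ha⟩
        fun x hx => (hsA x hx 0 k.zero_le).1
      obtain ⟨O, hO, hOne, hOA, hOz⟩ := hqc z δ hδ x' A (hA.mem_nhds hx'A)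
      refine ⟨(z, f (x', z)), O, hO, hOne, hOA,
        fun x hx => ⟨(hsA x (hOA hx) 0 k.zero_le).1, hBV hzB, by rw [dist_comm]; exact hOz x hx⟩,
        hzB, ?_⟩
      linarith [(hsA x' hx'A _ (Nat.unpair_left_le k)).2.2,
        dist_triangle (f (x', z)) (s k.unpair.1).2 (f (x', (s k.unpair.1).1)),
        dist_comm (s k.unpair.1).2 (f (x', (s k.unpair.1).1))])
    hA₀ hA₀ne (t₀ := (y₀, f (x₀, y₀)))
    fun x hx => ⟨hA₀U hx, hy₀, by rw [dist_comm]; exact hA₀y₀ x hx⟩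
  exact not_cliquishOn_range_of_forall_unpair (v := fun k => (c k).2)
    (fun i => (hb _ (hc i).1.2.1).2) hδ (fun k => (hc k).1.2.2) (fun k => (hc k).2)
    (hfrag x _ (range_nonempty _))

end Sections

theorem cliquish_of_quasicontinuous_sections {X Y Z : Type*} [TopologicalSpace X]
    [BaireSpace X] [TopologicalSpace Y] [MetricSpace Z] (f : X × Y → Z)
    (hY : ∀ y : Y, CountablePiBase y)
    (hqc : ∀ y : Y, Quasicontinuous' fun x : X => f (x, y))
    (hfrag : ∀ x : X, Fragmentable fun y : Y => f (x, y)) :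
    Cliquish f := by
  rintro ε hε W hW ⟨⟨x₀, y₀⟩, hp⟩
  obtain ⟨U, V, hU, hV, hx₀, hy₀, hUV⟩ := isOpen_prod_iff.1 hW x₀ y₀ hp
  obtain ⟨y, -, B, hB, hBne, hBV, A, hA, ⟨a, ha⟩, hAU, hAB⟩ := exists_open_forall_dist_le hY hqc
    hfrag hU hV ⟨x₀, hx₀⟩ ⟨y₀, hy₀⟩ (by positivity : 0 < ε / 4)
  obtain ⟨O, hO, hOne, hOA, hOa⟩ := hqc y (ε / 4) (by positivity) a A (hA.mem_nhds ha)
  have hclose : ∀ p ∈ O ×ˢ B, dist (f p) (f (a, y)) < ε / 2 := by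
    rintro ⟨x, z⟩ ⟨hx, hz⟩
    calc dist (f (x, z)) (f (a, y)) ≤ dist (f (x, z)) (f (x, y)) + dist (f (x, y)) (f (a, y)) :=
          dist_triangle _ _ _
      _ < ε / 4 + ε / 4 :=
          add_lt_add_of_le_of_lt (hAB x (hOA hx) z hz) (dist_comm (f (a, y)) _ ▸ hOa x hx)
      _ = ε / 2 := by ring
  refine ⟨O ×ˢ B, hO.prod hB, hOne.prod hBne, (prod_mono (hOA.trans hAU) hBV).trans hUV,
    fun p hp q hq => ?_⟩
  calc dist (f p) (f q) ≤ dist (f p) (f (a, y)) + dist (f q) (f (a, y)) := dist_triangle_right _ _ _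
    _ < ε / 2 + ε / 2 := add_lt_add (hclose p hp) (hclose q hq)
    _ = ε := by ring
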